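/- arXiv:math/0609400 — 4 statements merged into one kernel-verified Lean document; each statement's English description precedes it below -/
import Mathlib

section
/- Let M = (φ, ψ) be a matrix factorization of w and M' = (φ', ψ') a matrix factorization of w' over the same commutative ring R. Then the block matrices Φ = [[1⊗φ', ψ⊗1], [φ⊗1, −1⊗ψ']] and Ψ = [[1⊗ψ', ψ⊗1], [φ⊗1, −1⊗φ']] satisfy ΦΨ = ΨΦ = (w + w')·1, i.e., the tensor product M ⊗ M' is a matrix factorization of w + w'. -/
open Matrix
open scoped Kronecker

/-- The tensor product of a matrix factorization of `w` and one of `w'` is a matrix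
factorization of `w + w'`, via the block-Kronecker formulas. -/
theorem tensor_matrix_factorization {R : Type*} [CommRing R] {r s : ℕ} (w w' : R)
    (φ ψ : Matrix (Fin r) (Fin r) R) (φ' ψ' : Matrix (Fin s) (Fin s) R)
    (h1 : φ * ψ = w • (1 : Matrix (Fin r) (Fin r) R))
    (h2 : ψ * φ = w • (1 : Matrix (Fin r) (Fin r) R))
    (h1' : φ' * ψ' = w' • (1 : Matrix (Fin s) (Fin s) R))
    (h2' : ψ' * φ' = w' • (1 : Matrix (Fin s) (Fin s) R)) :
    let Φ := Matrix.fromBlocks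
      ((1 : Matrix (Fin r) (Fin r) R) ⊗ₖ φ') (ψ ⊗ₖ (1 : Matrix (Fin s) (Fin s) R))
      (φ ⊗ₖ (1 : Matrix (Fin s) (Fin s) R)) (-((1 : Matrix (Fin r) (Fin r) R) ⊗ₖ ψ'))
    let Ψ := Matrix.fromBlocks
      ((1 : Matrix (Fin r) (Fin r) R) ⊗ₖ ψ') (ψ ⊗ₖ (1 : Matrix (Fin s) (Fin s) R))
      (φ ⊗ₖ (1 : Matrix (Fin s) (Fin s) R)) (-((1 : Matrix (Fin r) (Fin r) R) ⊗ₖ φ'))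
    Φ * Ψ = (w + w') • (1 : Matrix ((Fin r × Fin s) ⊕ (Fin r × Fin s))
        ((Fin r × Fin s) ⊕ (Fin r × Fin s)) R) ∧
    Ψ * Φ = (w + w') • 1 := by
  intro Φ Ψ
  have key : ∀ (a' b' : Matrix (Fin s) (Fin s) R),
      a' * b' = w' • 1 → b' * a' = w' • 1 →
      Matrix.fromBlocks ((1 : Matrix (Fin r) (Fin r) R) ⊗ₖ a') (ψ ⊗ₖ 1) (φ ⊗ₖ 1)
          (-((1 : Matrix (Fin r) (Fin r) R) ⊗ₖ b')) *
        Matrix.fromBlocks ((1 : Matrix (Fin r) (Fin r) R) ⊗ₖ b') (ψ ⊗ₖ 1) (φ ⊗ₖ 1)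
          (-((1 : Matrix (Fin r) (Fin r) R) ⊗ₖ a')) =
        (w + w') • 1 := by
    intro a' b' h h'
    rw [Matrix.fromBlocks_multiply]
    simp only [Matrix.mul_neg, Matrix.neg_mul, neg_neg, ← Matrix.mul_kronecker_mul,
      h, h', h1, h2, Matrix.one_mul, Matrix.mul_one]
    conv_rhs => rw [← Matrix.fromBlocks_one (m := Fin r × Fin s), Matrix.fromBlocks_smul]
    simp [Matrix.kronecker_smul, Matrix.smul_kronecker, add_smul, add_comm]
  exact ⟨key φ' ψ' h1' h2', key ψ' φ' h2' h1'⟩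
end

section
/- Let M carry a bilinear structure of type ε ∈ {+1, −1} (orthogonal for ε = +1, symplectic for ε = −1) and M' carry a twisted bilinear structure of type ε'. Then the tensor product structure b ⊗ q' on M ⊗ M' is a (untwisted) bilinear structure of type εε'. -/
open Matrix
open scoped Kronecker

private lemma neg_kron {R : Type*} [CommRing R] {m n p q : Type*}
    (A : Matrix m n R) (B : Matrix p q R) : (-A) ⊗ₖ B = -(A ⊗ₖ B) := by
  ext i j; simp [Matrix.kroneckerMap]

/-- Tensoring an untwisted bilinear structure `b` of type `ε` on `M` (convention:
`bᵀ = −ε·b`, `b` odd, `b⁻¹ Qᵀ b = −Q`) with a twisted structure `q'` of type `ε'`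
on `M'` (`q'ᵀ = ε'·q'`, `q'` even, `q'⁻¹ Q'ᵀ q' = Q'`) yields the untwisted
bilinear structure `B = b ⊗ q'` of type `εε'` on `M ⊗ M'`, whose odd operator is
`Q ⊗ 1 + σ ⊗ Q'` with `σ` the grading involution of `M`. -/
theorem tensor_untwisted_twisted {R : Type*} [CommRing R] {r s : ℕ} (w w' : R)
    (φ ψ : Matrix (Fin r) (Fin r) R) (φ' ψ' : Matrix (Fin s) (Fin s) R)
    (h1 : φ * ψ = w • (1 : Matrix (Fin r) (Fin r) R))
    (h2 : ψ * φ = w • (1 : Matrix (Fin r) (Fin r) R))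
    (h1' : φ' * ψ' = w' • (1 : Matrix (Fin s) (Fin s) R))
    (h2' : ψ' * φ' = w' • (1 : Matrix (Fin s) (Fin s) R))
    (ε ε' : R) (hε : ε = 1 ∨ ε = -1) (hε' : ε' = 1 ∨ ε' = -1)
    (b : Matrix (Fin r ⊕ Fin r) (Fin r ⊕ Fin r) R)
    (q' : Matrix (Fin s ⊕ Fin s) (Fin s ⊕ Fin s) R)
    (hbU : IsUnit b) (hq'U : IsUnit q')
    -- `b` is an odd map, `q'` an even map:
    (hbodd : (Matrix.fromBlocks 1 0 0 (-1) : Matrix (Fin r ⊕ Fin r) (Fin r ⊕ Fin r) R) * b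
      = -(b * Matrix.fromBlocks 1 0 0 (-1)))
    (hq'even : (Matrix.fromBlocks 1 0 0 (-1) : Matrix (Fin s ⊕ Fin s) (Fin s ⊕ Fin s) R) * q'
      = q' * Matrix.fromBlocks 1 0 0 (-1))
    -- symmetry and adjunction conditions:
    (hbsym : bᵀ = (-ε) • b)
    (hbQ : (Matrix.fromBlocks 0 ψ φ 0)ᵀ * b = -(b * Matrix.fromBlocks 0 ψ φ 0))
    (hq'sym : q'ᵀ = ε' • q')
    (hq'Q : (Matrix.fromBlocks 0 ψ' φ' 0)ᵀ * q' = q' * Matrix.fromBlocks 0 ψ' φ' 0) :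
    let σ : Matrix (Fin r ⊕ Fin r) (Fin r ⊕ Fin r) R := Matrix.fromBlocks 1 0 0 (-1)
    let Q : Matrix (Fin r ⊕ Fin r) (Fin r ⊕ Fin r) R := Matrix.fromBlocks 0 ψ φ 0
    let Q' : Matrix (Fin s ⊕ Fin s) (Fin s ⊕ Fin s) R := Matrix.fromBlocks 0 ψ' φ' 0
    let Qtot := Q ⊗ₖ (1 : Matrix (Fin s ⊕ Fin s) (Fin s ⊕ Fin s) R) + σ ⊗ₖ Q'
    let B := b ⊗ₖ q'
    Bᵀ = (-(ε * ε')) • B ∧ Qtotᵀ * B = -(B * Qtot) := by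
  intro σ Q Q' Qtot B
  constructor
  · have : Bᵀ = bᵀ ⊗ₖ q'ᵀ := (Matrix.kroneckerMap_transpose _ _ _).symm
    rw [this, hbsym, hq'sym, Matrix.smul_kronecker, Matrix.kronecker_smul, smul_smul]
    ring_nf
    rfl
  · have hσsym : σᵀ = σ := by
      simp [σ, Matrix.fromBlocks_transpose]
    have hσb : σ * b = -(b * σ) := hbodd
    calc Qtotᵀ * B
        = (Qᵀ ⊗ₖ (1 : Matrix (Fin s ⊕ Fin s) (Fin s ⊕ Fin s) R)ᵀ
            + σᵀ ⊗ₖ Q'ᵀ) * (b ⊗ₖ q') := by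
          rw [Matrix.transpose_add, Matrix.kroneckerMap_transpose,
            Matrix.kroneckerMap_transpose]
      _ = (Qᵀ * b) ⊗ₖ ((1 : Matrix (Fin s ⊕ Fin s) (Fin s ⊕ Fin s) R)ᵀ * q')
            + (σᵀ * b) ⊗ₖ (Q'ᵀ * q') := by
          rw [add_mul, Matrix.mul_kronecker_mul, Matrix.mul_kronecker_mul]
      _ = (-(b * Q)) ⊗ₖ q' + (-(b * σ)) ⊗ₖ (q' * Q') := by
          rw [hσsym, hσb, hbQ, hq'Q, Matrix.transpose_one, one_mul]
      _ = -(B * Qtot) := by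
          have hBQ : B * Qtot = (b * Q) ⊗ₖ (q' * 1) + (b * σ) ⊗ₖ (q' * Q') := by
            rw [mul_add, Matrix.mul_kronecker_mul, Matrix.mul_kronecker_mul]
          rw [hBQ, mul_one, neg_add, neg_kron, neg_kron]
end

section
/- Let (P, Q) be a matrix factorization of π over A equipped with a twisted quadratic (resp. twisted symplectic) structure q. Then the Knörrer image θ(P, Q) carries a natural quadratic (resp. symplectic) structure, obtained as the tensor product of q with the canonical quadratic structure on the rank-one factorization (x, y) of xy; explicitly, the resulting isomorphism b: θ(P,Q) → θ(P,Q)* satisfies b^T = −b (resp. b^T = b) and b⁻¹ Q_θ^T b = −Q_θ where Q_θ is the odd operator of θ(P,Q). -/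
open Matrix

/-- If `(P,Q)` is a matrix factorization of `π` over `A` with a twisted quadratic
(`ε = 1`) or twisted symplectic (`ε = −1`) structure `q = diag(q₀, q₁)` — an even
invertible map with `q⁻¹ Qmᵀ q = Qm` (`Qm = [[0,Q],[P,0]]`) and `qᵀ = ε·q` — then the
Knörrer image `θ(P,Q)` carries a quadratic (resp. symplectic) structure: an invertible
`b` with `bᵀ = −(ε)·b` and `b⁻¹ Q_θᵀ b = −Q_θ`, where `Q_θ` is the odd operator of
`θ(P,Q)`. -/
theorem knorrer_twisted_to_untwisted {A : Type*} [CommRing A] {r : ℕ} (π : A)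
    (P Q : Matrix (Fin r) (Fin r) A)
    (h1 : P * Q = π • (1 : Matrix (Fin r) (Fin r) A))
    (h2 : Q * P = π • (1 : Matrix (Fin r) (Fin r) A))
    (ε : A) (hε : ε = 1 ∨ ε = -1)
    (q₀ q₁ : Matrix (Fin r) (Fin r) A)
    (hqU : IsUnit (Matrix.fromBlocks q₀ 0 0 q₁ : Matrix (Fin r ⊕ Fin r) (Fin r ⊕ Fin r) A))
    (hqadj : (Matrix.fromBlocks 0 Q P 0 : Matrix (Fin r ⊕ Fin r) (Fin r ⊕ Fin r) A)ᵀ *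
        Matrix.fromBlocks q₀ 0 0 q₁ =
      Matrix.fromBlocks q₀ 0 0 q₁ * Matrix.fromBlocks 0 Q P 0)
    (hqsym : (Matrix.fromBlocks q₀ 0 0 q₁ : Matrix (Fin r ⊕ Fin r) (Fin r ⊕ Fin r) A)ᵀ =
      ε • Matrix.fromBlocks q₀ 0 0 q₁) :
    let S := MvPowerSeries (Fin 2) A
    let c : A →+* S := MvPowerSeries.C (σ := Fin 2) (R := A)
    let φ : Matrix (Fin r ⊕ Fin r) (Fin r ⊕ Fin r) S :=
      Matrix.fromBlocks ((MvPowerSeries.X 0 : S) • 1) (P.map c)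
        (Q.map c) ((MvPowerSeries.X 1 : S) • 1)
    let ψ : Matrix (Fin r ⊕ Fin r) (Fin r ⊕ Fin r) S :=
      Matrix.fromBlocks ((MvPowerSeries.X 1 : S) • 1) (-(P.map c))
        (-(Q.map c)) ((MvPowerSeries.X 0 : S) • 1)
    let Qθ : Matrix ((Fin r ⊕ Fin r) ⊕ (Fin r ⊕ Fin r))
        ((Fin r ⊕ Fin r) ⊕ (Fin r ⊕ Fin r)) S := Matrix.fromBlocks 0 ψ φ 0
    ∃ b : Matrix ((Fin r ⊕ Fin r) ⊕ (Fin r ⊕ Fin r))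
        ((Fin r ⊕ Fin r) ⊕ (Fin r ⊕ Fin r)) S,
      IsUnit b ∧ bᵀ = (-(c ε)) • b ∧ Qθᵀ * b = -(b * Qθ) := by
  intro S c φ ψ Qθ
  -- mapped matrices
  set P' : Matrix (Fin r) (Fin r) S := P.map c with hP'
  set Q' : Matrix (Fin r) (Fin r) S := Q.map c with hQ'
  set q₀' : Matrix (Fin r) (Fin r) S := q₀.map c with hq₀'
  set q₁' : Matrix (Fin r) (Fin r) S := q₁.map c with hq₁'
  set e : S := c ε with he'
  -- ε² = 1
  have hee : e * e = 1 := by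
    rcases hε with h | h <;> subst h <;> simp +zetaDelta [he']
  -- block relations over A
  have hadj := hqadj
  rw [Matrix.fromBlocks_transpose, Matrix.fromBlocks_multiply, Matrix.fromBlocks_multiply,
    Matrix.fromBlocks_inj] at hadj
  obtain ⟨-, hPQ, hQP, -⟩ := hadj
  simp only [Matrix.transpose_zero, Matrix.mul_zero, Matrix.zero_mul, add_zero, zero_add] at hPQ hQP
  -- hPQ : Pᵀ * q₁ = q₀ * Q, hQP : Qᵀ * q₀ = q₁ * P
  have hsym := hqsym
  rw [Matrix.fromBlocks_transpose, Matrix.fromBlocks_smul, Matrix.fromBlocks_inj] at hsym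
  obtain ⟨hs₀, -, -, hs₁⟩ := hsym
  -- transfer to S
  have map_smul' : ∀ (M : Matrix (Fin r) (Fin r) A), (ε • M).map c = e • M.map c := by
    intro M; ext i j; simp [he', Matrix.smul_apply]
  have rPQ : P'ᵀ * q₁' = q₀' * Q' := by
    rw [hP', hq₁', hq₀', hQ', ← Matrix.transpose_map, ← Matrix.map_mul, ← Matrix.map_mul, hPQ]
  have rQP : Q'ᵀ * q₀' = q₁' * P' := by
    rw [hQ', hq₀', hq₁', hP', ← Matrix.transpose_map, ← Matrix.map_mul, ← Matrix.map_mul, hQP]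
  have s₀ : q₀'ᵀ = e • q₀' := by
    rw [hq₀', ← Matrix.transpose_map, hs₀, map_smul']
  have s₁ : q₁'ᵀ = e • q₁' := by
    rw [hq₁', ← Matrix.transpose_map, hs₁, map_smul']
  -- the middle unit u = diag(q₁', q₀')
  set u : Matrix (Fin r ⊕ Fin r) (Fin r ⊕ Fin r) S := Matrix.fromBlocks q₁' 0 0 q₀' with hu'
  -- u is a unit
  have hq0U : IsUnit q₀.det ∧ IsUnit q₁.det := by
    have := hqU.map (Matrix.detMonoidHom (n := Fin r ⊕ Fin r) (R := A))
    rw [Matrix.coe_detMonoidHom, Matrix.det_fromBlocks_zero₂₁] at this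
    exact ⟨isUnit_of_mul_isUnit_left this, isUnit_of_mul_isUnit_right this⟩
  have huU : IsUnit u := by
    rw [Matrix.isUnit_iff_isUnit_det, hu', Matrix.det_fromBlocks_zero₂₁,
      hq₁', hq₀', ← RingHom.mapMatrix_apply, ← RingHom.mapMatrix_apply,
      ← RingHom.map_det, ← RingHom.map_det]
    exact (hq0U.2.map c).mul (hq0U.1.map c)
  obtain ⟨U, hU⟩ := huU
  -- candidate b
  refine ⟨Matrix.fromBlocks 0 u (-u) 0, ?_, ?_, ?_⟩
  · -- IsUnit
    refine (isUnit_iff_exists.mpr ⟨Matrix.fromBlocks 0 (-(U⁻¹ : Units _).val)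
      ((U⁻¹ : Units _).val) 0, ?_, ?_⟩)
    · rw [Matrix.fromBlocks_multiply]
      simp +zetaDelta [← hU, ← Units.val_mul, Matrix.fromBlocks_one]
    · rw [Matrix.fromBlocks_multiply]
      simp +zetaDelta [← hU, ← Units.val_mul, Matrix.fromBlocks_one]
  · -- bᵀ = (-e) • b
    have hut : uᵀ = e • u := by
      rw [hu', Matrix.fromBlocks_transpose, Matrix.fromBlocks_smul, s₀, s₁]
      simp
    rw [Matrix.fromBlocks_transpose, Matrix.fromBlocks_smul, Matrix.transpose_zero,
      Matrix.transpose_neg, hut]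
    rw [Matrix.fromBlocks_inj]
    refine ⟨?_, ?_, ?_, ?_⟩ <;> simp +zetaDelta [neg_smul]
  · -- Qθᵀ * b = -(b * Qθ)
    have key1 : φᵀ * u = u * φ := by
      show (Matrix.fromBlocks ((MvPowerSeries.X 0 : S) • 1) P' Q'
          ((MvPowerSeries.X 1 : S) • 1))ᵀ * u = u * _
      rw [Matrix.fromBlocks_transpose, hu', Matrix.fromBlocks_multiply,
        Matrix.fromBlocks_multiply, Matrix.fromBlocks_inj]
      refine ⟨?_, ?_, ?_, ?_⟩ <;>
        simp [Matrix.transpose_smul, Matrix.smul_mul, Matrix.mul_smul, rPQ, rQP, ← hP', ← hQ']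
    have key2 : ψᵀ * u = u * ψ := by
      show (Matrix.fromBlocks ((MvPowerSeries.X 1 : S) • 1) (-P') (-Q')
          ((MvPowerSeries.X 0 : S) • 1))ᵀ * u = u * _
      rw [Matrix.fromBlocks_transpose, hu', Matrix.fromBlocks_multiply,
        Matrix.fromBlocks_multiply, Matrix.fromBlocks_inj]
      refine ⟨?_, ?_, ?_, ?_⟩ <;>
        simp [Matrix.transpose_smul, Matrix.smul_mul, Matrix.mul_smul, rPQ, rQP, ← hP', ← hQ']
    show (Matrix.fromBlocks 0 ψ φ 0)ᵀ * _ = _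
    rw [Matrix.fromBlocks_transpose, Matrix.fromBlocks_multiply, Matrix.fromBlocks_multiply]
    simp only [Matrix.transpose_zero, Matrix.mul_zero, Matrix.zero_mul, Matrix.mul_neg,
      add_zero, zero_add, Matrix.fromBlocks_neg, neg_zero, neg_neg]
    rw [key1, key2]

    rw [Matrix.neg_mul, neg_neg]
end

section
/- Let M = (φ, ψ) be a matrix factorization of w over R. The cokernel coker(φ) is a module over R/(w) (i.e., multiplication by w annihilates coker(φ)), and moreover over R/(w) it admits the 2-periodic free resolution ⋯ → (R/(w))^r →^ψ (R/(w))^r →^φ (R/(w))^r → coker(φ) → 0 when R is a regular local ring and w is a non-zerodivisor. -/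
open Matrix

private lemma map_mulVec' {R S : Type*} [CommRing R] [CommRing S] (f : R →+* S) {r : ℕ}
    (M : Matrix (Fin r) (Fin r) R) (x : Fin r → R) :
    (M.map f).mulVec (fun i => f (x i)) = fun i => f (M.mulVec x i) := by
  funext i
  simp [Matrix.mulVec, dotProduct, map_sum]

private lemma range_eq_ker_aux {R : Type*} [CommRing R] {r : ℕ} (w : R)
    (hw : w ∈ nonZeroDivisors R) (φ ψ : Matrix (Fin r) (Fin r) R)
    (h1 : φ * ψ = w • (1 : Matrix (Fin r) (Fin r) R))
    (h2 : ψ * φ = w • (1 : Matrix (Fin r) (Fin r) R)) :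
    LinearMap.range (Matrix.toLin' (ψ.map (Ideal.Quotient.mk (Ideal.span {w})))) =
      LinearMap.ker (Matrix.toLin' (φ.map (Ideal.Quotient.mk (Ideal.span {w})))) := by
  set mk := Ideal.Quotient.mk (Ideal.span {w}) with hmk
  apply le_antisymm
  · rintro _ ⟨v, rfl⟩
    simp only [LinearMap.mem_ker, Matrix.toLin'_apply]
    have key : φ.map mk * ψ.map mk = 0 := by
      rw [← Matrix.map_mul, h1]
      ext i j
      simp only [Matrix.map_apply, Matrix.smul_apply, smul_eq_mul, Matrix.zero_apply]
      rw [hmk, Ideal.Quotient.eq_zero_iff_mem, Ideal.mem_span_singleton]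
      exact dvd_mul_right _ _
    rw [Matrix.mulVec_mulVec, key, Matrix.zero_mulVec]
  · rintro v hv
    simp only [LinearMap.mem_ker, Matrix.toLin'_apply] at hv
    -- lift v
    obtain ⟨x, hx⟩ : ∃ x : Fin r → R, (fun i => mk (x i)) = v := by
      choose x hx using fun i => Ideal.Quotient.mk_surjective (v i)
      exact ⟨x, funext hx⟩
    rw [← hx, map_mulVec'] at hv
    have hmem : ∀ i, φ.mulVec x i ∈ Ideal.span ({w} : Set R) := by
      intro i
      rw [← Ideal.Quotient.eq_zero_iff_mem]
      exact congrFun hv i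
    choose y hy using fun i => (Ideal.mem_span_singleton'.mp (hmem i))
    have hxy : x = ψ.mulVec y := by
      have hwx : w • x = w • ψ.mulVec y := by
        have : ψ.mulVec (φ.mulVec x) = w • x := by
          rw [Matrix.mulVec_mulVec, h2, Matrix.smul_mulVec, Matrix.one_mulVec]
        rw [← this]
        have : φ.mulVec x = w • y := by
          funext i; rw [Pi.smul_apply, smul_eq_mul, ← hy i, mul_comm]
        rw [this, Matrix.mulVec_smul]
      funext i
      have := congrFun hwx i
      simp only [Pi.smul_apply, smul_eq_mul] at this
      exact mul_cancel_left_mem_nonZeroDivisors hw |>.mp this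
    refine ⟨fun i => mk (y i), ?_⟩
    rw [Matrix.toLin'_apply, map_mulVec', ← hx]
    funext i
    rw [hxy]

/-- For a matrix factorization `(φ, ψ)` of a non-zerodivisor `w` over a regular local
ring `R` (regularity encoded as: Noetherian local with maximal ideal generated by
`dim R` elements), the cokernel of `φ` is annihilated by `w` (hence is an
`R/(w)`-module), and over `R̄ = R/(w)` the sequence
`⋯ → R̄^r →^ψ̄ R̄^r →^φ̄ R̄^r → coker(φ̄) → 0` is a 2-periodic free resolution:
it is exact at each spot. -/
theorem cokernel_two_periodic_resolution {R : Type*} [CommRing R] [IsNoetherianRing R]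
    [IsLocalRing R]
    (hreg : ∃ s : Finset R, Ideal.span (s : Set R) = IsLocalRing.maximalIdeal R ∧
      (s.card : WithBot (WithTop ℕ)) = ringKrullDim R)
    {r : ℕ} (w : R) (hw : w ∈ nonZeroDivisors R)
    (φ ψ : Matrix (Fin r) (Fin r) R)
    (h1 : φ * ψ = w • (1 : Matrix (Fin r) (Fin r) R))
    (h2 : ψ * φ = w • (1 : Matrix (Fin r) (Fin r) R)) :
    -- `w` annihilates the cokernel of `φ`:
    (∀ z : (Fin r → R) ⧸ LinearMap.range (Matrix.toLin' φ), w • z = 0) ∧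
    -- 2-periodic exactness over `R̄ = R/(w)`:
    (LinearMap.range (Matrix.toLin'
        (ψ.map (Ideal.Quotient.mk (Ideal.span {w})))) =
      LinearMap.ker (Matrix.toLin' (φ.map (Ideal.Quotient.mk (Ideal.span {w})))) ∧
     LinearMap.range (Matrix.toLin'
        (φ.map (Ideal.Quotient.mk (Ideal.span {w})))) =
      LinearMap.ker (Matrix.toLin' (ψ.map (Ideal.Quotient.mk (Ideal.span {w})))) ∧
     Function.Surjective
       (LinearMap.range (Matrix.toLin'
          (φ.map (Ideal.Quotient.mk (Ideal.span {w}))))).mkQ) := by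
  refine ⟨?_, range_eq_ker_aux w hw φ ψ h1 h2, range_eq_ker_aux w hw ψ φ h2 h1,
    Submodule.mkQ_surjective _⟩
  intro z
  obtain ⟨x, rfl⟩ := Submodule.Quotient.mk_surjective _ z
  rw [← Submodule.Quotient.mk_smul, Submodule.Quotient.mk_eq_zero]
  refine ⟨ψ.mulVec x, ?_⟩
  rw [Matrix.toLin'_apply, Matrix.mulVec_mulVec, h1, Matrix.smul_mulVec,
    Matrix.one_mulVec]
end
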